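/- arXiv:math/0111205 — 5 statements merged into one kernel-verified Lean document; each statement's English description precedes it below -/
import Mathlib

section
/- Let C be a strict monoidal category, X an object, and {e_X(Y) : X⊗Y → Y⊗X}_{Y∈C} a family of morphisms natural in Y, satisfying the braid relation and e_X(𝟙) = id_X. If an object Y has a right dual Y*, then e_X(Y) is an isomorphism. -/
open CategoryTheory MonoidalCategory

/-- If a family `e Y : X ⊗ Y ⟶ Y ⊗ X`, natural in `Y`, satisfies the braid relation
and the unit condition, then `e Y` is an isomorphism whenever `Y` has a right dual `Yd`,
witnessed by `ε : 𝟙 ⟶ Yd ⊗ Y` and `η : Y ⊗ Yd ⟶ 𝟙` satisfying the zig-zag equations. -/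
theorem halfBraiding_isIso_of_rightDual {C : Type*} [Category C] [MonoidalCategory C] (X : C)
    (e : ∀ Y : C, X ⊗ Y ⟶ Y ⊗ X)
    (hnat : ∀ {Y Z : C} (t : Y ⟶ Z), e Y ≫ (t ▷ X) = (X ◁ t) ≫ e Z)
    (hbraid : ∀ Y Z : C, e (Y ⊗ Z) =
      (α_ X Y Z).inv ≫ (e Y ▷ Z) ≫ (α_ Y X Z).hom ≫ (Y ◁ e Z) ≫ (α_ Y Z X).inv)
    (hunit : e (𝟙_ C) = (ρ_ X).hom ≫ (λ_ X).inv)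
    (Y Yd : C) (ε : 𝟙_ C ⟶ Yd ⊗ Y) (η : Y ⊗ Yd ⟶ 𝟙_ C)
    (zig₁ : (ρ_ Y).inv ≫ (Y ◁ ε) ≫ (α_ Y Yd Y).inv ≫ (η ▷ Y) ≫ (λ_ Y).hom = 𝟙 Y)
    (zig₂ : (λ_ Yd).inv ≫ (ε ▷ Yd) ≫ (α_ Yd Y Yd).hom ≫ (Yd ◁ η) ≫ (ρ_ Yd).hom = 𝟙 Yd) :
    IsIso (e Y) := by
  have zig' : (Y ◁ ε) ≫ (α_ Y Yd Y).inv ≫ (η ▷ Y) = (ρ_ Y).hom ≫ (λ_ Y).inv := by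
    have h := congrArg (fun f => (ρ_ Y).hom ≫ f ≫ (λ_ Y).inv) zig₁
    simpa using h
  let g : Y ⊗ X ⟶ X ⊗ Y :=
    𝟙 (Y ⊗ X) ⊗≫ ((Y ⊗ X : C) ◁ ε) ⊗≫ Y ◁ e Yd ▷ Y ⊗≫ η ▷ ((X ⊗ Y : C)) ⊗≫ 𝟙 (X ⊗ Y)
  have he₁ : e Y ≫ g = 𝟙 (X ⊗ Y) := by
    calc e Y ≫ g
        = 𝟙 _ ⊗≫ (e Y ▷ 𝟙_ C ≫ (Y ⊗ X) ◁ ε) ⊗≫ Y ◁ e Yd ▷ Y ⊗≫ η ▷ ((X ⊗ Y : C)) ⊗≫ 𝟙 _ := by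
          dsimp only [g]; monoidal
      _ = 𝟙 _ ⊗≫ ((X ⊗ Y : C) ◁ ε) ⊗≫ e Y ▷ ((Yd ⊗ Y : C)) ⊗≫ Y ◁ e Yd ▷ Y ⊗≫ η ▷ ((X ⊗ Y : C)) ⊗≫ 𝟙 _ := by
          rw [← whisker_exchange]; monoidal
      _ = 𝟙 _ ⊗≫ ((X ⊗ Y : C) ◁ ε) ⊗≫ (e (Y ⊗ Yd) ≫ η ▷ X) ▷ Y ⊗≫ 𝟙 _ := by
          rw [hbraid]; monoidal
      _ = 𝟙 _ ⊗≫ ((X ⊗ Y : C) ◁ ε) ⊗≫ (X ◁ η ≫ e (𝟙_ C)) ▷ Y ⊗≫ 𝟙 _ := by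
          rw [← hnat]
      _ = 𝟙 _ ⊗≫ X ◁ ((Y ◁ ε) ≫ (α_ Y Yd Y).inv ≫ (η ▷ Y)) ⊗≫ 𝟙 _ := by
          rw [hunit]; monoidal
      _ = 𝟙 (X ⊗ Y) := by
          rw [zig']; monoidal
  have he₂ : g ≫ e Y = 𝟙 (Y ⊗ X) := by
    calc g ≫ e Y
        = 𝟙 _ ⊗≫ ((Y ⊗ X : C) ◁ ε) ⊗≫ Y ◁ e Yd ▷ Y ⊗≫ (η ▷ ((X ⊗ Y : C)) ≫ 𝟙_ C ◁ e Y) ⊗≫ 𝟙 _ := by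
          dsimp only [g]; monoidal
      _ = 𝟙 _ ⊗≫ ((Y ⊗ X : C) ◁ ε) ⊗≫ Y ◁ e Yd ▷ Y ⊗≫ (((Y ⊗ Yd : C)) ◁ e Y ≫ η ▷ ((Y ⊗ X : C))) ⊗≫ 𝟙 _ := by
          rw [whisker_exchange]
      _ = 𝟙 _ ⊗≫ Y ◁ ((X ◁ ε) ≫ e (Yd ⊗ Y)) ⊗≫ η ▷ ((Y ⊗ X : C)) ⊗≫ 𝟙 _ := by
          rw [hbraid]
          monoidal
      _ = 𝟙 _ ⊗≫ Y ◁ (e (𝟙_ C) ≫ ε ▷ X) ⊗≫ η ▷ ((Y ⊗ X : C)) ⊗≫ 𝟙 _ := by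
          rw [hnat]
      _ = 𝟙 _ ⊗≫ ((Y ◁ ε) ≫ (α_ Y Yd Y).inv ≫ (η ▷ Y)) ▷ X ⊗≫ 𝟙 _ := by
          rw [hunit]; monoidal
      _ = 𝟙 (Y ⊗ X) := by
          rw [zig']; monoidal
  exact ⟨g, he₁, he₂⟩
end

section
/- Let C be a semisimple F-linear monoidal category with a finite set {X_i}_{i∈Γ} of representatives of the isomorphism classes of simple objects. Then, for a fixed object Z, there is a bijective correspondence between (a) families of morphisms {e_Z(X_i) : Z⊗X_i → X_i⊗Z}_{i∈Γ} satisfying the 'braiding-fusion' relation (t ⊗ id_Z) ∘ e_Z(X_k) = (id_{X_i} ⊗ e_Z(X_j)) ∘ (e_Z(X_i) ⊗ id_{X_j}) ∘ (id_Z ⊗ t) for all i, j, k ∈ Γ and all t ∈ Hom(X_k, X_i⊗X_j), and (b) families {e_Z(X) : Z⊗X → X⊗Z}_{X∈C} natural in X and satisfying the braid relation e_Z(X⊗Y) = (id_X ⊗ e_Z(Y)) ∘ (e_Z(X) ⊗ id_Y). Moreover all e_Z(X) are isomorphisms if and only if all e_Z(X_i), i ∈ Γ, are isomorphisms. -/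
/-!
Splitting the unit into simple summands `𝟙 = ∑ π_p ≫ ι_p` and applying the braiding-fusion
relation to `t = v ≫ (ρ_ _).inv ≫ X_i ◁ π_p` yields, after summing over `p`,
`e(X_k) ≫ v ▷ Z = Z ◁ v ≫ e(X_i) ≫ X_i ◁ E` with an endomorphism `E` of `Z` independent of `v`;
taking `v = 𝟙` shows that the twist by `E` is trivial, so `e` is natural on the simple objects.
A family natural on the simples extends uniquely to all objects, by
`e(Y) = ∑ Z ◁ π_p ≫ e(X_p) ≫ ι_p ▷ Z` for any decomposition of `Y`. The braid relation for
`Y ⊗ Y'` is checked on the summands `X_p ⊗ X_q`, where it is the braiding-fusion relation, and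
the inverse of `e(Y)` is assembled from the inverses on the summands in the same way.
-/

open CategoryTheory MonoidalCategory CategoryTheory.Limits

namespace CategoryTheory

variable {C : Type*} [Category C]

section Coherence

variable [MonoidalCategory C] {Z : C}

def braidTensor {Y Y' : C} (a : Z ⊗ Y ⟶ Y ⊗ Z) (b : Z ⊗ Y' ⟶ Y' ⊗ Z) :
    Z ⊗ (Y ⊗ Y') ⟶ (Y ⊗ Y') ⊗ Z :=
  (α_ Z Y Y').inv ≫ (a ▷ Y') ≫ (α_ Y Z Y').hom ≫ (Y ◁ b) ≫ (α_ Y Y' Z).inv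

lemma braidTensor_comp_whiskerRight_whiskerRight {Y Y' Y₁ : C} {a : Z ⊗ Y ⟶ Y ⊗ Z}
    {b : Z ⊗ Y' ⟶ Y' ⊗ Z} {a₁ : Z ⊗ Y₁ ⟶ Y₁ ⊗ Z} {s : Y ⟶ Y₁} (hs : a ≫ s ▷ Z = Z ◁ s ≫ a₁) :
    braidTensor a b ≫ (s ▷ Y') ▷ Z = Z ◁ (s ▷ Y') ≫ braidTensor a₁ b := by
  simp only [braidTensor, Category.assoc]
  rw [← associator_inv_naturality_left, whisker_exchange_assoc,
    ← associator_naturality_left_assoc, ← comp_whiskerRight_assoc, hs, comp_whiskerRight_assoc,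
    ← associator_inv_naturality_middle_assoc]

lemma braidTensor_comp_whiskerLeft_whiskerRight {Y Y' Y₁' : C} {a : Z ⊗ Y ⟶ Y ⊗ Z}
    {b : Z ⊗ Y' ⟶ Y' ⊗ Z} {b₁ : Z ⊗ Y₁' ⟶ Y₁' ⊗ Z} {s' : Y' ⟶ Y₁'} (hs' : b ≫ s' ▷ Z = Z ◁ s' ≫ b₁) :
    braidTensor a b ≫ (Y ◁ s') ▷ Z = Z ◁ (Y ◁ s') ≫ braidTensor a b₁ := by
  simp only [braidTensor, Category.assoc]
  rw [← associator_inv_naturality_middle, ← MonoidalCategory.whiskerLeft_comp_assoc, hs',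
    MonoidalCategory.whiskerLeft_comp_assoc, ← associator_naturality_right_assoc,
    ← whisker_exchange_assoc, ← associator_inv_naturality_right_assoc]

lemma braidTensor_comp_tensorHom_whiskerRight {Y Y' Y₁ Y₁' : C} {a : Z ⊗ Y ⟶ Y ⊗ Z}
    {b : Z ⊗ Y' ⟶ Y' ⊗ Z} {a₁ : Z ⊗ Y₁ ⟶ Y₁ ⊗ Z} {b₁ : Z ⊗ Y₁' ⟶ Y₁' ⊗ Z}
    {s : Y ⟶ Y₁} {s' : Y' ⟶ Y₁'} (hs : a ≫ s ▷ Z = Z ◁ s ≫ a₁)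
    (hs' : b ≫ s' ▷ Z = Z ◁ s' ≫ b₁) :
    braidTensor a b ≫ (s ⊗ₘ s') ▷ Z = Z ◁ (s ⊗ₘ s') ≫ braidTensor a₁ b₁ := by
  rw [MonoidalCategory.tensorHom_def, comp_whiskerRight, ← Category.assoc,
    braidTensor_comp_whiskerRight_whiskerRight hs, Category.assoc,
    braidTensor_comp_whiskerLeft_whiskerRight hs', MonoidalCategory.whiskerLeft_comp_assoc]

lemma whiskerLeft_comp_braidTensor_comp_whiskerRight_of_unit {W U : C} (a : Z ⊗ W ⟶ W ⊗ Z)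
    (b : Z ⊗ U ⟶ U ⊗ Z) (s : 𝟙_ C ⟶ U) (r : U ⟶ 𝟙_ C) :
    Z ◁ ((ρ_ W).inv ≫ W ◁ s) ≫ braidTensor a b ≫ (W ◁ r ≫ (ρ_ W).hom) ▷ Z =
      a ≫ W ◁ ((ρ_ Z).inv ≫ Z ◁ s ≫ b ≫ r ▷ Z ≫ (λ_ Z).hom) := by
  simp only [braidTensor, MonoidalCategory.whiskerLeft_comp, comp_whiskerRight, Category.assoc]
  rw [associator_inv_naturality_right_assoc, whisker_exchange_assoc]
  simp

end Coherence

variable [Preadditive C]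

structure SumDecomposition {Γ : Type*} (X : Γ → C) (Y : C) where
  J : Type
  [fintype : Fintype J]
  index : J → Γ
  π : ∀ p, Y ⟶ X (index p)
  ι : ∀ p, X (index p) ⟶ Y
  sum_π_ι : ∑ p, π p ≫ ι p = 𝟙 Y

attribute [instance] SumDecomposition.fintype

namespace SumDecomposition

variable {Γ : Type*} {X : Γ → C} {Y : C}

noncomputable def ofIsoBiproduct [HasFiniteBiproducts C] {J : Type} [Fintype J] (σ : J → Γ)
    (h : Y ≅ ⨁ fun p => X (σ p)) : SumDecomposition X Y where
  J := J
  index := σ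
  π p := h.hom ≫ biproduct.π (fun p => X (σ p)) p
  ι p := biproduct.ι (fun p => X (σ p)) p ≫ h.inv
  sum_π_ι := calc
    _ = h.hom ≫ (∑ p, biproduct.π (fun p => X (σ p)) p ≫ biproduct.ι (fun p => X (σ p)) p) ≫
        h.inv := by
      simp only [Preadditive.comp_sum, Preadditive.sum_comp, Category.assoc]
    _ = 𝟙 Y := by simp

variable [MonoidalCategory C] [MonoidalPreadditive C]

def tensor {Γ' : Type*} {X' : Γ' → C} {Y' : C} (D : SumDecomposition X Y)
    (D' : SumDecomposition X' Y') :
    SumDecomposition (fun q : Γ × Γ' => X q.1 ⊗ X' q.2) (Y ⊗ Y') where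
  J := D.J × D'.J
  index q := (D.index q.1, D'.index q.2)
  π q := D.π q.1 ⊗ₘ D'.π q.2
  ι q := D.ι q.1 ⊗ₘ D'.ι q.2
  sum_π_ι := calc
    _ = (∑ p, D.π p ≫ D.ι p) ⊗ₘ (∑ q, D'.π q ≫ D'.ι q) := by
      rw [sum_tensor]
      simp only [tensor_sum, Fintype.sum_prod_type, tensorHom_comp_tensorHom]
    _ = 𝟙 (Y ⊗ Y') := by simp [sum_π_ι]

variable {Z : C}

def extend (D : SumDecomposition X Y) (f : ∀ i, Z ⊗ X i ⟶ X i ⊗ Z) : Z ⊗ Y ⟶ Y ⊗ Z :=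
  ∑ p, Z ◁ D.π p ≫ f (D.index p) ≫ D.ι p ▷ Z

lemma eq_extend (D : SumDecomposition X Y) {φ : Z ⊗ Y ⟶ Y ⊗ Z} {f : ∀ i, Z ⊗ X i ⟶ X i ⊗ Z}
    (h : ∀ p, φ ≫ D.π p ▷ Z = Z ◁ D.π p ≫ f (D.index p)) : φ = D.extend f := by
  calc φ = φ ≫ (∑ p, D.π p ≫ D.ι p) ▷ Z := by rw [D.sum_π_ι, id_whiskerRight, Category.comp_id]
    _ = D.extend f := by
      simp only [sum_whiskerRight, Preadditive.comp_sum, comp_whiskerRight, reassoc_of% h, extend]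

lemma hom_ext (D : SumDecomposition X Y) {W : C} {φ ψ : W ⟶ Y ⊗ Z}
    (h : ∀ p, φ ≫ D.π p ▷ Z = ψ ≫ D.π p ▷ Z) : φ = ψ := by
  calc φ = φ ≫ (∑ p, D.π p ≫ D.ι p) ▷ Z := by rw [D.sum_π_ι, id_whiskerRight, Category.comp_id]
    _ = ψ ≫ (∑ p, D.π p ≫ D.ι p) ▷ Z := by
      simp only [sum_whiskerRight, Preadditive.comp_sum, comp_whiskerRight, reassoc_of% h]
    _ = ψ := by rw [D.sum_π_ι, id_whiskerRight, Category.comp_id]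

section Natural

variable {f : ∀ i, Z ⊗ X i ⟶ X i ⊗ Z}
  (hf : ∀ {i j : Γ} (v : X i ⟶ X j), f i ≫ v ▷ Z = Z ◁ v ≫ f j)
include hf

lemma extend_comp_whiskerRight_of_natural (D : SumDecomposition X Y) {j : Γ} (u : Y ⟶ X j) :
    D.extend f ≫ u ▷ Z = Z ◁ u ≫ f j := by
  calc D.extend f ≫ u ▷ Z = ∑ p, Z ◁ (D.π p ≫ D.ι p ≫ u) ≫ f j := by
        simp only [extend, Preadditive.sum_comp, Category.assoc, ← comp_whiskerRight, hf,
          MonoidalCategory.whiskerLeft_comp]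
    _ = Z ◁ ((∑ p, D.π p ≫ D.ι p) ≫ u) ≫ f j := by simp [Preadditive.sum_comp, whiskerLeft_sum]
    _ = Z ◁ u ≫ f j := by rw [D.sum_π_ι, Category.id_comp]

lemma extend_comp_whiskerRight (D : SumDecomposition X Y) {Y' : C} (D' : SumDecomposition X Y')
    (t : Y ⟶ Y') : D.extend f ≫ t ▷ Z = Z ◁ t ≫ D'.extend f :=
  D'.hom_ext fun q => by
    rw [Category.assoc, Category.assoc, ← comp_whiskerRight,
      extend_comp_whiskerRight_of_natural hf, extend_comp_whiskerRight_of_natural hf,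
      MonoidalCategory.whiskerLeft_comp_assoc]

end Natural

lemma isIso_of_natural {g : ∀ Y : C, Z ⊗ Y ⟶ Y ⊗ Z}
    (hg : ∀ {Y Y' : C} (t : Y ⟶ Y'), g Y ≫ t ▷ Z = Z ◁ t ≫ g Y') (D : SumDecomposition X Y)
    [∀ p, IsIso (g (X (D.index p)))] : IsIso (g Y) := by
  refine ⟨∑ p, D.π p ▷ Z ≫ inv (g _) ≫ Z ◁ D.ι p, ?_, ?_⟩
  · calc g Y ≫ ∑ p, D.π p ▷ Z ≫ inv (g _) ≫ Z ◁ D.ι p = Z ◁ ∑ p, D.π p ≫ D.ι p := by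
          simp [Preadditive.comp_sum, whiskerLeft_sum, reassoc_of% (hg _)]
      _ = 𝟙 _ := by simp [D.sum_π_ι]
  · calc (∑ p, D.π p ▷ Z ≫ inv (g _) ≫ Z ◁ D.ι p) ≫ g Y = (∑ p, D.π p ≫ D.ι p) ▷ Z := by
          simp [Preadditive.sum_comp, sum_whiskerRight, ← hg]
      _ = 𝟙 _ := by simp [D.sum_π_ι]

end SumDecomposition

open SumDecomposition

section BraidingFusion

variable [MonoidalCategory C] [MonoidalPreadditive C] {Z : C} {Γ : Type*} {X : Γ → C}
  {f : ∀ i, Z ⊗ X i ⟶ X i ⊗ Z}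
  (hf : ∀ (i j k : Γ) (t : X k ⟶ X i ⊗ X j), f k ≫ t ▷ Z = Z ◁ t ≫ braidTensor (f i) (f j))
include hf

lemma natural_of_braidingFusion (D : SumDecomposition X (𝟙_ C)) {i j : Γ} (v : X i ⟶ X j) :
    f i ≫ v ▷ Z = Z ◁ v ≫ f j := by
  set E := (ρ_ Z).inv ≫ D.extend f ≫ (λ_ Z).hom
  have twisted : ∀ {i j : Γ} (v : X i ⟶ X j), f i ≫ v ▷ Z = Z ◁ v ≫ f j ≫ X j ◁ E := by
    intro i j v
    calc f i ≫ v ▷ Z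
        = f i ≫ (v ≫ (ρ_ _).inv ≫ X j ◁ (∑ p, D.π p ≫ D.ι p) ≫ (ρ_ _).hom) ▷ Z := by
          simp [D.sum_π_ι]
      _ = ∑ p, f i ≫ (v ≫ (ρ_ _).inv ≫ X j ◁ D.π p) ▷ Z ≫ (X j ◁ D.ι p ≫ (ρ_ _).hom) ▷ Z := by
          simp only [whiskerLeft_sum, Preadditive.sum_comp, Preadditive.comp_sum, sum_whiskerRight,
            comp_whiskerRight, MonoidalCategory.whiskerLeft_comp, Category.assoc]
      _ = ∑ p, Z ◁ v ≫ Z ◁ ((ρ_ _).inv ≫ X j ◁ D.π p) ≫ braidTensor (f j) (f (D.index p)) ≫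
            (X j ◁ D.ι p ≫ (ρ_ _).hom) ▷ Z := by
          simp only [reassoc_of% (hf _ _ _ _), MonoidalCategory.whiskerLeft_comp, Category.assoc]
      _ = ∑ p, Z ◁ v ≫ f j ≫
            X j ◁ ((ρ_ Z).inv ≫ Z ◁ D.π p ≫ f (D.index p) ≫ D.ι p ▷ Z ≫ (λ_ Z).hom) := by
          simp only [whiskerLeft_comp_braidTensor_comp_whiskerRight_of_unit]
      _ = Z ◁ v ≫ f j ≫ X j ◁ E := by
          simp [E, extend, whiskerLeft_sum, Preadditive.comp_sum, Preadditive.sum_comp]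
  have hE : f j ≫ X j ◁ E = f j := by simpa using (twisted (𝟙 (X j))).symm
  rw [twisted v, hE]

lemma extend_eq_braidTensor {a b : Γ} (D : SumDecomposition X (X a ⊗ X b)) :
    D.extend f = braidTensor (f a) (f b) :=
  calc D.extend f = ∑ p, Z ◁ (D.π p ≫ D.ι p) ≫ braidTensor (f a) (f b) := by simp [extend, hf]
    _ = Z ◁ (∑ p, D.π p ≫ D.ι p) ≫ braidTensor (f a) (f b) := by
      simp [whiskerLeft_sum, Preadditive.sum_comp]
    _ = braidTensor (f a) (f b) := by simp [D.sum_π_ι]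

lemma extend_tensor_eq_braidTensor (D : ∀ Y, SumDecomposition X Y) (Y Y' : C) :
    (D (Y ⊗ Y')).extend f = braidTensor ((D Y).extend f) ((D Y').extend f) := by
  have hnat {i j : Γ} (v : X i ⟶ X j) := natural_of_braidingFusion hf (D (𝟙_ C)) v
  let T := (D Y).tensor (D Y')
  trans T.extend fun q => braidTensor (f q.1) (f q.2)
  · refine T.eq_extend fun q => ?_
    rw [extend_comp_whiskerRight hnat _ (D _), extend_eq_braidTensor hf]
  · refine (T.eq_extend fun q => ?_).symm
    exact braidTensor_comp_tensorHom_whiskerRight (extend_comp_whiskerRight_of_natural hnat _ _)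
      (extend_comp_whiskerRight_of_natural hnat _ _)

end BraidingFusion

end CategoryTheory

theorem halfBraiding_from_simples_general {C : Type*} [Category C]
    [MonoidalCategory C] [Preadditive C] [MonoidalPreadditive C]
    [HasFiniteBiproducts C]
    (Γ : Type) [Fintype Γ] (X : Γ → C)
    (hcomplete : ∀ Z : C, ∃ n : Γ → ℕ,
      Nonempty (Z ≅ ⨁ fun p : (Σ i : Γ, Fin (n i)) => X p.1))
    (Z : C) :
    let A : (∀ i : Γ, Z ⊗ X i ⟶ X i ⊗ Z) → Prop := fun f =>
      ∀ (i j k : Γ) (t : X k ⟶ X i ⊗ X j),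
        f k ≫ (t ▷ Z) =
          (Z ◁ t) ≫ (α_ Z (X i) (X j)).inv ≫ (f i ▷ X j) ≫ (α_ (X i) Z (X j)).hom ≫
            (X i ◁ f j) ≫ (α_ (X i) (X j) Z).inv
    let B : (∀ Y : C, Z ⊗ Y ⟶ Y ⊗ Z) → Prop := fun g =>
      (∀ {Y Y' : C} (t : Y ⟶ Y'), g Y ≫ (t ▷ Z) = (Z ◁ t) ≫ g Y') ∧
      (∀ Y Y' : C, g (Y ⊗ Y') =
        (α_ Z Y Y').inv ≫ (g Y ▷ Y') ≫ (α_ Y Z Y').hom ≫ (Y ◁ g Y') ≫ (α_ Y Y' Z).inv)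
    (∀ g, B g → A (fun i => g (X i))) ∧
    (∀ f, A f → ∃ g, B g ∧ ∀ i, g (X i) = f i) ∧
    (∀ g g', B g → B g' → (∀ i, g (X i) = g' (X i)) → g = g') ∧
    (∀ g, B g → ((∀ Y, IsIso (g Y)) ↔ ∀ i, IsIso (g (X i)))) := by
  intro A B
  choose n hn using hcomplete
  let D (Y : C) : SumDecomposition X Y := SumDecomposition.ofIsoBiproduct Sigma.fst (hn Y).some
  refine ⟨fun g hg i j k t => ?_, fun f hf => ?_, fun g g' hg hg' h => ?_, fun g hg => ?_⟩
  · rw [hg.1 t, hg.2]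
  · have hnat {i j : Γ} (v : X i ⟶ X j) := natural_of_braidingFusion hf (D (𝟙_ C)) v
    exact ⟨fun Y => (D Y).extend f, ⟨SumDecomposition.extend_comp_whiskerRight hnat _ _,
      extend_tensor_eq_braidTensor hf D⟩, fun i => ((D _).eq_extend fun _ => hnat _).symm⟩
  · funext Y
    rw [(D Y).eq_extend (f := fun i => g (X i)) fun _ => hg.1 _,
      (D Y).eq_extend (f := fun i => g' (X i)) fun _ => hg'.1 _, funext h]
  · exact ⟨fun h i => h (X i), fun h Y => SumDecomposition.isIso_of_natural hg.1 (D Y)⟩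

/-- Let `C` be a semisimple `F`-linear monoidal category with representative simple
objects `X i`, `i ∈ Γ` (Γ finite).  For a fixed object `Z` there is a bijective correspondence
between families `e_Z(X i) : Z ⊗ X i ⟶ X i ⊗ Z` satisfying the braiding-fusion relation and
families `e_Z(Y) : Z ⊗ Y ⟶ Y ⊗ Z`, natural in `Y`, satisfying the braid relation; and all
`e_Z(Y)` are isomorphisms iff all `e_Z(X i)` are. -/
theorem halfBraiding_from_simples (F : Type*) [Field F] {C : Type*} [Category C]
    [MonoidalCategory C] [Preadditive C] [CategoryTheory.Linear F C] [MonoidalPreadditive C]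
    [MonoidalLinear F C] [HasFiniteBiproducts C] [IsIdempotentComplete C]
    (Γ : Type) [Fintype Γ] (X : Γ → C)
    (hsimple : ∀ (i : Γ) (f : X i ⟶ X i), ∃! a : F, f = a • 𝟙 (X i))
    (hdistinct : ∀ i j : Γ, Nonempty (X i ≅ X j) → i = j)
    (hcomplete : ∀ Z : C, ∃ n : Γ → ℕ,
      Nonempty (Z ≅ ⨁ fun p : (Σ i : Γ, Fin (n i)) => X p.1))
    (hunit : ∀ f : 𝟙_ C ⟶ 𝟙_ C, ∃! a : F, f = a • 𝟙 (𝟙_ C))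
    (Z : C) :
    let A : (∀ i : Γ, Z ⊗ X i ⟶ X i ⊗ Z) → Prop := fun f =>
      ∀ (i j k : Γ) (t : X k ⟶ X i ⊗ X j),
        f k ≫ (t ▷ Z) =
          (Z ◁ t) ≫ (α_ Z (X i) (X j)).inv ≫ (f i ▷ X j) ≫ (α_ (X i) Z (X j)).hom ≫
            (X i ◁ f j) ≫ (α_ (X i) (X j) Z).inv
    let B : (∀ Y : C, Z ⊗ Y ⟶ Y ⊗ Z) → Prop := fun g =>
      (∀ {Y Y' : C} (t : Y ⟶ Y'), g Y ≫ (t ▷ Z) = (Z ◁ t) ≫ g Y') ∧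
      (∀ Y Y' : C, g (Y ⊗ Y') =
        (α_ Z Y Y').inv ≫ (g Y ▷ Y') ≫ (α_ Y Z Y').hom ≫ (Y ◁ g Y') ≫ (α_ Y Y' Z).inv)
    (∀ g, B g → A (fun i => g (X i))) ∧
    (∀ f, A f → ∃ g, B g ∧ ∀ i, g (X i) = f i) ∧
    (∀ g g', B g → B g' → (∀ i, g (X i) = g' (X i)) → g = g') ∧
    (∀ g, B g → ((∀ Y, IsIso (g Y)) ↔ ∀ i, IsIso (g (X i)))) :=
  halfBraiding_from_simples_general Γ X hcomplete Z
end

section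
/- Let A be a finite-dimensional algebra over a field F equipped with a trace tr : A → F (a linear map with tr(ab) = tr(ba)) which is non-degenerate and vanishes on all nilpotent elements. Then A is semisimple. Conversely, any trace on a finite-dimensional semisimple F-algebra vanishes on nilpotent elements. -/
open Submodule

/-- In a left artinian ring, every element of the Jacobson radical is nilpotent. -/
lemma aux_nilpotent_of_mem_jacobson {A : Type*} [Ring A] [IsArtinian A A]
    {c : A} (hc : c ∈ Ideal.jacobson (⊥ : Ideal A)) : IsNilpotent c := by
  have hmono : ∀ n m : ℕ, n ≤ m → Ideal.span {c ^ m} ≤ Ideal.span {c ^ n} := by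
    intro n m h
    rw [Ideal.span_le, Set.singleton_subset_iff]
    obtain ⟨k, rfl⟩ := Nat.exists_eq_add_of_le h
    rw [add_comm, pow_add, ← smul_eq_mul]
    exact Submodule.smul_mem _ _ (Submodule.mem_span_singleton_self _)
  let f : ℕ →o (Ideal A)ᵒᵈ := ⟨fun n => Ideal.span {c ^ n}, fun n m h => hmono n m h⟩
  obtain ⟨n, hn⟩ := IsArtinian.monotone_stabilizes f
  have hmem : c ^ n ∈ Ideal.span {c ^ (n + 1)} := by
    have : Ideal.span {c ^ n} = Ideal.span {c ^ (n + 1)} := hn (n + 1) (Nat.le_succ n)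
    exact this ▸ Submodule.mem_span_singleton_self _
  obtain ⟨x, hx⟩ := Submodule.mem_span_singleton.mp hmem
  rw [smul_eq_mul] at hx
  have hxc : x * c ∈ Ideal.jacobson (⊥ : Ideal A) := by
    rw [← smul_eq_mul]; exact Submodule.smul_mem _ _ hc
  have key : (1 - x * c) * c ^ n = 0 := by
    rw [sub_mul, one_mul, mul_assoc, ← pow_succ', hx, sub_self]
  have hunit : ∃ u : A, u * (1 - x * c) = 1 := by
    by_contra h
    push_neg at h
    have hne : Ideal.span {1 - x * c} ≠ ⊤ := by
      intro htop
      have h1 : (1 : A) ∈ Ideal.span {1 - x * c} := htop ▸ trivial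
      obtain ⟨u, hu⟩ := Submodule.mem_span_singleton.mp h1
      exact h u (by simpa [smul_eq_mul] using hu)
    obtain ⟨M, hM, hle⟩ := Ideal.exists_le_maximal _ hne
    have hJM : Ideal.jacobson (⊥ : Ideal A) ≤ M := sInf_le ⟨bot_le, hM⟩
    have h1M : (1 : A) ∈ M := by
      have := M.add_mem (hle (Submodule.mem_span_singleton_self _)) (hJM hxc)
      simpa using this
    exact hM.ne_top ((Ideal.eq_top_iff_one M).mpr h1M)
  obtain ⟨u, hu⟩ := hunit
  refine ⟨n, ?_⟩
  calc c ^ n = u * (1 - x * c) * c ^ n := by rw [hu, one_mul]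
    _ = u * ((1 - x * c) * c ^ n) := mul_assoc _ _ _
    _ = 0 := by rw [key, mul_zero]

/-- A finite-dimensional algebra over a field carrying a non-degenerate trace which
vanishes on nilpotent elements is semisimple; conversely, every trace on a finite-dimensional
semisimple algebra vanishes on nilpotent elements. -/
theorem semisimple_iff_trace_vanishes_on_nilpotents (F : Type*) [Field F] (A : Type*) [Ring A]
    [Algebra F A] [FiniteDimensional F A] :
    (∀ tr : A →ₗ[F] F, (∀ a b : A, tr (a * b) = tr (b * a)) →
      (∀ a : A, a ≠ 0 → ∃ b : A, tr (a * b) ≠ 0) →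
      (∀ a : A, IsNilpotent a → tr a = 0) → IsSemisimpleRing A) ∧
    (IsSemisimpleRing A → ∀ tr : A →ₗ[F] F, (∀ a b : A, tr (a * b) = tr (b * a)) →
      ∀ a : A, IsNilpotent a → tr a = 0) := by
  constructor
  · intro tr hsym hnd hnil
    haveI hart : IsArtinian A A := isArtinian_of_tower F inferInstance
    -- the Jacobson radical is trivial
    have hJ : Ideal.jacobson (⊥ : Ideal A) = ⊥ := by
      rw [eq_bot_iff]
      intro a ha
      rw [Submodule.mem_bot]
      by_contra hne
      obtain ⟨b, hb⟩ := hnd a hne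
      apply hb
      rw [hsym]
      refine hnil _ (aux_nilpotent_of_mem_jacobson ?_)
      rw [← smul_eq_mul]; exact Submodule.smul_mem _ _ ha
    classical
    -- find finitely many maximal left ideals with trivial intersection
    obtain ⟨I₀, ⟨s, hs, rfl⟩, hmin⟩ := IsArtinian.set_has_minimal
      {I : Ideal A | ∃ s : Finset (Ideal A), (∀ M ∈ s, M.IsMaximal) ∧ I = s.inf id}
      ⟨⊤, ∅, by simp, by simp⟩
    have hbot : s.inf id = ⊥ := by
      by_contra hne
      have hnle : ¬ s.inf id ≤ Ideal.jacobson (⊥ : Ideal A) := by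
        rw [hJ]; exact fun h => hne (le_bot_iff.mp h)
      obtain ⟨M, hM, hMnle⟩ : ∃ M, (⊥ ≤ M ∧ M.IsMaximal) ∧ ¬ s.inf id ≤ M := by
        by_contra h
        push_neg at h
        exact hnle (le_sInf h)
      refine hmin ((insert M s).inf id) ⟨insert M s, ?_, rfl⟩ ?_
      · intro N hN
        rcases Finset.mem_insert.mp hN with rfl | h
        exacts [hM.2, hs N h]
      · rw [Finset.inf_insert]
        exact inf_lt_right.mpr hMnle
    let φ : A →ₗ[A] (∀ i : {M // M ∈ s}, A ⧸ (i.1 : Ideal A)) :=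
      LinearMap.pi fun i => (i.1 : Ideal A).mkQ
    have hker : LinearMap.ker φ = ⊥ := by
      rw [LinearMap.ker_pi]
      simp only [Submodule.ker_mkQ]
      rw [← hbot, Finset.inf_eq_iInf, iInf_subtype']
      rfl
    haveI hsimple : ∀ i : {M // M ∈ s}, IsSimpleModule A (A ⧸ (i.1 : Ideal A)) := fun i =>
      isSimpleModule_iff_isCoatom.mpr ((Ideal.isMaximal_def).mp (hs i.1 i.2))
    haveI hssT : IsSemisimpleModule A (∀ i : {M // M ∈ s}, A ⧸ (i.1 : Ideal A)) := by
      refine isSemisimpleModule_of_isSemisimpleModule_submodule'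
        (p := fun i => LinearMap.range (LinearMap.single A (fun i : {M // M ∈ s} => A ⧸ (i.1 : Ideal A)) i))
        (fun i => IsSemisimpleModule.range _) ?_
      simp_rw [LinearMap.range_eq_map, Submodule.iSup_map_single, Submodule.pi_top]
    exact IsSemisimpleModule.congr (M := ↥(LinearMap.range φ))
      (LinearEquiv.ofInjective φ (LinearMap.ker_eq_bot.mp hker))
  · intro hss tr hsym a hnila
    obtain ⟨n, hn⟩ := hnila
    induction n generalizing a with
    | zero =>
      rw [pow_zero] at hn
      have : a = 0 := by
        calc a = 1 * a := (one_mul a).symm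
          _ = 0 * a := by rw [hn]
          _ = 0 := zero_mul a
      rw [this, map_zero]
    | succ n ih =>
      rcases Nat.eq_zero_or_pos n with rfl | hpos
      · rw [pow_one] at hn; rw [hn, map_zero]
      obtain ⟨m, rfl⟩ : ∃ m, n = m + 1 := ⟨n - 1, (Nat.succ_pred_eq_of_pos hpos).symm⟩
      -- a ^ (m + 2) = 0
      obtain ⟨e, he, hI⟩ := IsSemisimpleRing.ideal_eq_span_idempotent (Ideal.span {a ^ (m + 1)})
      obtain ⟨t, ht⟩ := Submodule.mem_span_singleton.mp
        (hI ▸ Submodule.mem_span_singleton_self e : e ∈ Ideal.span {a ^ (m + 1)})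
      obtain ⟨v, hv⟩ := Submodule.mem_span_singleton.mp
        (hI ▸ Submodule.mem_span_singleton_self (a ^ (m + 1)) : a ^ (m + 1) ∈ Ideal.span {e})
      rw [smul_eq_mul] at ht hv
      have hea : e * a = 0 := by
        rw [← ht, mul_assoc, ← pow_succ, hn, mul_zero]
      have hane : a ^ (m + 1) * e = a ^ (m + 1) := by
        rw [← hv, mul_assoc, he.eq, hv]
      have h1 : (1 - e) * a = a := by rw [sub_mul, one_mul, hea, sub_zero]
      have hbk : ∀ k : ℕ, (a * (1 - e)) ^ (k + 1) = a ^ (k + 1) * (1 - e) := by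
        intro k
        induction k with
        | zero => rw [pow_one, pow_one]
        | succ k ihk =>
          rw [pow_succ, ihk, mul_assoc, ← mul_assoc (1 - e) a (1 - e), h1,
            ← mul_assoc, ← pow_succ]
      have hbn : (a * (1 - e)) ^ (m + 1) = 0 := by
        rw [hbk m, mul_sub, mul_one, hane, sub_self]
      have h2 : tr (a * (1 - e)) = 0 := ih _ hbn
      have h3 : tr (a * e) = 0 := by rw [hsym, hea, map_zero]
      have : a = a * e + a * (1 - e) := by rw [mul_sub, mul_one]; abel
      rw [this, map_add, h2, h3, add_zero]
end

section
/- Let A be a finite-dimensional semisimple algebra over a field F with a non-degenerate trace tr : A → F. Let B ⊆ A be a unital subalgebra (containing the unit of A), and suppose there exists a conditional expectation E : A → B, i.e., a linear map with E(b a b') = b E(a) b' for all a ∈ A and b, b' ∈ B, satisfying tr ∘ E = tr. Then B is semisimple. -/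
/-!
Non-degeneracy of the trace together with `tr ∘ E = tr` forces `E 1 = 1`, so `E` is a
`B`-bimodule retraction of `A` onto `B`. A left ideal `I` of `B` then generates a left ideal
`A I` of the semisimple ring `A`, which has an `A`-linear projection `π` onto it; since `E` maps
`A I` into `I`, the map `b ↦ E (π b)` is a `B`-linear projection of `B` onto `I`, so `I` is
complemented.
-/

section

variable {A B : Type*} [Ring A] [Ring B]

theorem eq_of_forall_trace_mul_eq {M : Type*} [AddCommGroup M] (tr : A →+ M)
    (hnd : ∀ a : A, a ≠ 0 → ∃ b : A, tr (a * b) ≠ 0) {x y : A}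
    (h : ∀ c, tr (x * c) = tr (y * c)) : x = y := by
  by_contra hxy
  obtain ⟨c, hc⟩ := hnd (x - y) (sub_ne_zero.mpr hxy)
  exact hc (by rw [sub_mul, map_sub, h, sub_self])

def IsBimoduleHom (i : B →+* A) (E : A →+ B) : Prop :=
  ∀ (a : A) (b b' : B), E (i b * a * i b') = b * E a * b'

namespace IsBimoduleHom

variable {i : B →+* A} {E : A →+ B}

theorem map_mul_left (hE : IsBimoduleHom i E) (b : B) (a : A) : E (i b * a) = b * E a := by
  simpa using hE a b 1

theorem map_mul_right (hE : IsBimoduleHom i E) (a : A) (b : B) : E (a * i b) = E a * b := by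
  simpa using hE a 1 b

theorem map_apply (hE : IsBimoduleHom i E) (b : B) : E (i b) = b * E 1 := by
  simpa using hE.map_mul_left b 1

theorem map_mem_of_mem_span (hE : IsBimoduleHom i E) {I : Submodule B B} {a : A}
    (ha : a ∈ Submodule.span A (i '' I)) : E a ∈ I := by
  suffices h : ∀ c : A, E (c * a) ∈ I by simpa using h 1
  induction ha using Submodule.span_induction with
  | mem x hx =>
    obtain ⟨y, hy, rfl⟩ := hx
    intro c
    rw [hE.map_mul_right]
    exact I.smul_mem (E c) hy
  | zero => simp
  | add x y _ _ hx hy => intro c; rw [mul_add, map_add]; exact I.add_mem (hx c) (hy c)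
  | smul r x _ hx => intro c; rw [smul_eq_mul, ← mul_assoc]; exact hx (c * r)

theorem exists_retraction [IsSemisimpleRing A] (hE : IsBimoduleHom i E)
    (hEi : ∀ b, E (i b) = b) (I : Submodule B B) : ∃ f : B →ₗ[B] I, ∀ x : I, f x = x := by
  set I' := Submodule.span A (i '' I)
  obtain ⟨J, hJ⟩ := ComplementedLattice.exists_isCompl I'
  set π := I'.projectionOnto J hJ
  have hπ (x : I) : π (i x) = ⟨i x, Submodule.subset_span ⟨x, x.2, rfl⟩⟩ :=
    Submodule.projectionOnto_apply_left hJ ⟨i x, _⟩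
  refine ⟨{ toFun := fun b ↦ ⟨E (π (i b)), hE.map_mem_of_mem_span (π (i b)).2⟩
            map_add' := fun x y ↦ by ext; simp
            map_smul' := fun c x ↦ by
              ext
              change E (π (i (c * x))) = c * E (π (i x))
              rw [map_mul, ← smul_eq_mul (i c), map_smul, Submodule.coe_smul, smul_eq_mul,
                hE.map_mul_left] }, fun x ↦ ?_⟩
  ext
  simp [hπ, hEi]

theorem isSemisimpleRing [IsSemisimpleRing A] (hE : IsBimoduleHom i E)
    (hEi : ∀ b, E (i b) = b) : IsSemisimpleRing B where
  exists_isCompl I := by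
    obtain ⟨f, hf⟩ := hE.exists_retraction hEi I
    exact ⟨LinearMap.ker f, LinearMap.isCompl_of_proj hf⟩

theorem map_one_of_trace {M : Type*} [AddCommGroup M] (hE : IsBimoduleHom i E)
    (hi : Function.Injective i) (tr : A →+ M) (htr : ∀ a b : A, tr (a * b) = tr (b * a))
    (hnd : ∀ a : A, a ≠ 0 → ∃ b : A, tr (a * b) ≠ 0) (htrE : ∀ a, tr (i (E a)) = tr a) :
    E 1 = 1 := by
  refine hi <| (map_one i).symm ▸ eq_of_forall_trace_mul_eq tr hnd fun c ↦ ?_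
  calc tr (i (E 1) * c) = tr (i (E 1 * E c)) := by rw [← hE.map_mul_left, htrE]
    _ = tr (i (E (i (E c)))) := by rw [hE.map_apply, map_mul i, map_mul i, htr]
    _ = tr (1 * c) := by rw [htrE, htrE, one_mul]

end IsBimoduleHom

end

theorem subalgebra_semisimple_of_conditional_expectation_general (F : Type*) [Field F] (A : Type*)
    [Ring A] [Algebra F A] [IsSemisimpleRing A]
    (tr : A →ₗ[F] F) (htr : ∀ a b : A, tr (a * b) = tr (b * a))
    (hnd : ∀ a : A, a ≠ 0 → ∃ b : A, tr (a * b) ≠ 0)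
    (B : Subalgebra F A) (E : A →ₗ[F] B)
    (hE : ∀ (a : A) (b b' : B), E ((b : A) * a * (b' : A)) = b * E a * b')
    (htrE : ∀ a : A, tr (E a : A) = tr a) :
    IsSemisimpleRing B := by
  have hbimod : IsBimoduleHom (B.val : B →+* A) E.toAddMonoidHom := hE
  have hE1 : E 1 = 1 :=
    hbimod.map_one_of_trace Subtype.val_injective tr.toAddMonoidHom htr hnd htrE
  exact hbimod.isSemisimpleRing fun b ↦ by simpa [hE1] using hbimod.map_apply b

/-- If `A` is a finite-dimensional semisimple algebra over `F` with a non-degenerate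
trace `tr`, `B ⊆ A` is a unital subalgebra, and `E : A → B` is a conditional expectation
(`E(b a b') = b E(a) b'`) satisfying `tr ∘ E = tr`, then `B` is semisimple. -/
theorem subalgebra_semisimple_of_conditional_expectation (F : Type*) [Field F] (A : Type*)
    [Ring A] [Algebra F A] [FiniteDimensional F A] [IsSemisimpleRing A]
    (tr : A →ₗ[F] F) (htr : ∀ a b : A, tr (a * b) = tr (b * a))
    (hnd : ∀ a : A, a ≠ 0 → ∃ b : A, tr (a * b) ≠ 0)
    (B : Subalgebra F A) (E : A →ₗ[F] B)
    (hE : ∀ (a : A) (b b' : B), E ((b : A) * a * (b' : A)) = b * E a * b')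
    (htrE : ∀ a : A, tr (E a : A) = tr a) :
    IsSemisimpleRing B :=
  subalgebra_semisimple_of_conditional_expectation_general F A tr htr hnd B E hE htrE
end

section
/- Let C be a braided monoidal category, and let I : C → Z₁(C) and Ĩ : C̃ → Z₁(C) be the embeddings given by I(X) = (X, c(X,-)) and Ĩ(X) = (X, c(-,X)^{-1}), where C̃ is C with the reversed braiding. Then the relative commutant of I(C) inside Z₁(C) equals Ĩ(C̃), and the relative commutant of Ĩ(C̃) equals I(C). In particular I(C)'' = I(C). -/
open CategoryTheory MonoidalCategory

/-!
Both halves reduce to one computation: in `Z₁(C)` the double braiding of `I(U)` with `(Z, e_Z)` is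
`c(U, Z) ≫ e_Z(U)`, and the double braiding of `Ĩ(U)` with it is `c(Z, U)⁻¹ ≫ e_Z(U)`. So `Z`
commutes with all of `I(C)` iff `e_Z(U) = c(U, Z)⁻¹` for every `U`, i.e. `Z ∈ Ĩ(C̃)`, and `Z`
commutes with all of `Ĩ(C̃)` iff `e_Z = c(Z, -)`, i.e. `Z ∈ I(C)`. The double commutant follows.
-/

/-- The relative commutant `D ∩ P'` of a class `P` of objects of a braided category `D`. -/
def CategoryTheory.BraidedCategory.commutant {D : Type*} [Category D] [MonoidalCategory D]
    [BraidedCategory D] (P : D → Prop) (Z : D) : Prop :=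
  ∀ W : D, P W → (β_ W Z).hom ≫ (β_ Z W).hom = 𝟙 (W ⊗ Z)

namespace CategoryTheory.Center

open BraidedCategory

variable {C : Type*} [Category C] [MonoidalCategory C]

lemma braiding_hom_comp_braiding_hom_eq_id_iff (X Y : Center C) :
    (β_ X Y).hom ≫ (β_ Y X).hom = 𝟙 (X ⊗ Y) ↔
      (X.2.β Y.1).hom ≫ (Y.2.β X.1).hom = 𝟙 (X.1 ⊗ Y.1) :=
  ⟨fun h => congrArg Hom.f h, fun h => Hom.ext h⟩

variable [BraidedCategory C]

/-- The embedding `Ĩ : C̃ → Z₁(C)` on objects. -/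
abbrev ofReverseBraidedObj (X : C) : Center C :=
  @ofBraidedObj C _ _ (reverseBraiding C) X

/-- `Z` lies in the image `I(C)`. -/
def IsOfBraided (Z : Center C) : Prop :=
  ∀ U : C, (Z.2.β U).hom = (β_ Z.1 U).hom

/-- `Z` lies in the image `Ĩ(C̃)`. -/
def IsOfReverseBraided (Z : Center C) : Prop :=
  ∀ U : C, (Z.2.β U).hom = (β_ U Z.1).inv

lemma isOfBraided_ofBraidedObj (X : C) : IsOfBraided (ofBraidedObj X) := fun _ => rfl

lemma isOfReverseBraided_ofReverseBraidedObj (X : C) :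
    IsOfReverseBraided (ofReverseBraidedObj X) := fun _ => rfl

lemma ofBraidedObj_monodromy_eq_id_iff (U : C) (Z : Center C) :
    (β_ (ofBraidedObj U) Z).hom ≫ (β_ Z (ofBraidedObj U)).hom = 𝟙 _ ↔
      (Z.2.β U).hom = (β_ U Z.1).inv := by
  rw [braiding_hom_comp_braiding_hom_eq_id_iff]
  exact Iso.hom_comp_eq_id (β_ U Z.1)

lemma ofReverseBraidedObj_monodromy_eq_id_iff (U : C) (Z : Center C) :
    (β_ (ofReverseBraidedObj U) Z).hom ≫ (β_ Z (ofReverseBraidedObj U)).hom = 𝟙 _ ↔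
      (Z.2.β U).hom = (β_ Z.1 U).hom := by
  rw [braiding_hom_comp_braiding_hom_eq_id_iff]
  exact Iso.inv_comp_eq_id (β_ Z.1 U)

lemma monodromy_eq_id_of_isOfBraided_of_isOfReverseBraided {W Z : Center C}
    (hW : IsOfBraided W) (hZ : IsOfReverseBraided Z) :
    (β_ W Z).hom ≫ (β_ Z W).hom = 𝟙 (W ⊗ Z) := by
  rw [braiding_hom_comp_braiding_hom_eq_id_iff, hW, hZ, Iso.hom_inv_id]

lemma monodromy_eq_id_of_isOfReverseBraided_of_isOfBraided {W Z : Center C}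
    (hW : IsOfReverseBraided W) (hZ : IsOfBraided Z) :
    (β_ W Z).hom ≫ (β_ Z W).hom = 𝟙 (W ⊗ Z) := by
  rw [braiding_hom_comp_braiding_hom_eq_id_iff, hW, hZ, Iso.inv_hom_id]

lemma commutant_isOfBraided_iff (Z : Center C) :
    commutant IsOfBraided Z ↔ IsOfReverseBraided Z :=
  ⟨fun h U => (ofBraidedObj_monodromy_eq_id_iff U Z).1 (h _ (isOfBraided_ofBraidedObj U)),
    fun hZ _ hW => monodromy_eq_id_of_isOfBraided_of_isOfReverseBraided hW hZ⟩

lemma commutant_isOfReverseBraided_iff (Z : Center C) :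
    commutant IsOfReverseBraided Z ↔ IsOfBraided Z :=
  ⟨fun h U => (ofReverseBraidedObj_monodromy_eq_id_iff U Z).1
      (h _ (isOfReverseBraided_ofReverseBraidedObj U)),
    fun hZ _ hW => monodromy_eq_id_of_isOfReverseBraided_of_isOfBraided hW hZ⟩

lemma commutant_commutant_isOfBraided_iff (Z : Center C) :
    commutant (commutant IsOfBraided) Z ↔ IsOfBraided Z := by
  have : commutant (D := Center C) IsOfBraided = IsOfReverseBraided :=
    funext fun W => propext (commutant_isOfBraided_iff W)
  rw [this, commutant_isOfReverseBraided_iff]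

end CategoryTheory.Center

open CategoryTheory.Center in
/-- For a braided monoidal category `C`, in the Drinfeld center `Z₁(C)` the relative
commutant of the image of `I : C → Z₁(C)` (objects with half braiding `c(X,-)`) is exactly the
image of `Ĩ : C̃ → Z₁(C)` (objects with half braiding `c(-,X)⁻¹`, i.e. the reversed braiding),
and vice versa.  In particular `I(C)'' = I(C)`. -/
theorem center_commutant_ofBraided {C : Type*} [Category C] [MonoidalCategory C]
    [BraidedCategory C] :
    let InI : Center C → Prop := fun Z => ∀ U : C, (Z.2.β U).hom = (β_ Z.1 U).hom
    let InIt : Center C → Prop := fun Z => ∀ U : C, (Z.2.β U).hom = (β_ U Z.1).inv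
    let Comm : (Center C → Prop) → Center C → Prop := fun P Z =>
      ∀ W : Center C, P W → (β_ W Z).hom ≫ (β_ Z W).hom = 𝟙 (W ⊗ Z)
    (∀ Z : Center C, Comm InI Z ↔ InIt Z) ∧
    (∀ Z : Center C, Comm InIt Z ↔ InI Z) ∧
    (∀ Z : Center C, Comm (Comm InI) Z ↔ InI Z) :=
  ⟨commutant_isOfBraided_iff, commutant_isOfReverseBraided_iff,
    commutant_commutant_isOfBraided_iff⟩
end
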